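/- arXiv:math/0608682 — 5 statements merged into one kernel-verified Lean document; each statement's English description precedes it below -/
import Mathlib

section
/- A unitary matrix u ∈ U(n) is symmetric (uᵗ = u) if and only if there exists an orthogonal matrix k ∈ O(n) such that k u k⁻¹ is diagonal. -/
/-!
Write `u = X + i Y` with `X`, `Y` real. If `uᵀ = u`, then `X` and `Y` are symmetric and
`u⋆ = X - i Y`, so `u⋆ u - u u⋆ = 2i (XY - YX)`: since `u` is unitary, hence normal, `X` and `Y`
commute. Two commuting real symmetric matrices have a common orthonormal eigenbasis, i.e. are
diagonalized by one orthogonal `k`, and then `k u k⁻¹ = k X k⁻¹ + i k Y k⁻¹` is diagonal.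
Conversely, if `k u k⁻¹ = D` is diagonal with `k` real orthogonal, then `u = kᵀ D k` is symmetric.
-/

open Matrix Module.End

section SimultaneousDiagonalization

variable {𝕜 E ι : Type*} [RCLike 𝕜] [Fintype ι]

theorem LinearMap.IsSymmetric.exists_orthonormalBasis_eigenvectors_of_commute
    [NormedAddCommGroup E] [InnerProductSpace 𝕜 E] [FiniteDimensional 𝕜 E]
    {A B : E →ₗ[𝕜] E} (hA : A.IsSymmetric) (hB : B.IsSymmetric) (hAB : Commute A B)
    (hι : Module.finrank 𝕜 E = Fintype.card ι) :
    ∃ b : OrthonormalBasis ι 𝕜 E,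
      ∀ i, (∃ μ : 𝕜, A (b i) = μ • b i) ∧ ∃ ν : 𝕜, B (b i) = ν • b i := by
  classical
  set V : 𝕜 × 𝕜 → Submodule 𝕜 E := fun μ => eigenspace A μ.2 ⊓ eigenspace B μ.1
  have hV : DirectSum.IsInternal fun μ : {μ // V μ ≠ ⊥} => V μ :=
    DirectSum.isInternal_ne_bot_iff.mpr (hA.directSum_isInternal_of_commute hB hAB)
  have hV' :
      OrthogonalFamily 𝕜 (fun μ : {μ // V μ ≠ ⊥} => V μ) fun μ => (V μ).subtypeₗᵢ :=
    (hA.orthogonalFamily_eigenspace_inf_eigenspace hB).comp Subtype.val_injective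
  -- `subordinateOrthonormalBasis` needs a finite index set: keep only the nonzero joint eigenspaces
  have : Fintype {μ // V μ ≠ ⊥} := @Fintype.ofFinite _ <|
    WellFoundedGT.finite_of_iSupIndep hV.submodule_iSupIndep fun μ => μ.2
  refine ⟨(hV.subordinateOrthonormalBasis hι hV').reindex (Fintype.equivFin ι).symm,
    fun i => ?_⟩
  obtain ⟨hμ, hν⟩ :=
    hV.subordinateOrthonormalBasis_subordinate hι (Fintype.equivFin ι i) hV'
  simp only [OrthonormalBasis.reindex_apply, Equiv.symm_symm]
  exact ⟨⟨_, mem_eigenspace_iff.mp hμ⟩, _, mem_eigenspace_iff.mp hν⟩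

variable [DecidableEq ι]

theorem OrthonormalBasis.isDiag_star_toMatrix_mul_mul_toMatrix
    (b : OrthonormalBasis ι 𝕜 (EuclideanSpace 𝕜 ι)) {M : Matrix ι ι 𝕜}
    (hM : ∀ j, ∃ μ : 𝕜, M *ᵥ b j = μ • b j) :
    (star ((EuclideanSpace.basisFun ι 𝕜).toBasis.toMatrix b.toBasis) * M *
      (EuclideanSpace.basisFun ι 𝕜).toBasis.toMatrix b.toBasis).IsDiag := by
  set U := (EuclideanSpace.basisFun ι 𝕜).toBasis.toMatrix b.toBasis
  have hU : star U * U = 1 := mem_unitaryGroup_iff'.mp <|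
    (EuclideanSpace.basisFun ι 𝕜).toMatrix_orthonormalBasis_mem_unitary b
  have hcol : ∀ j, U *ᵥ Pi.single j 1 = b j := fun j => by
    ext i; simp [U, Module.Basis.toMatrix_apply]
  have hcol' : ∀ j, star U *ᵥ b j = Pi.single j 1 := fun j => by
    rw [← hcol, mulVec_mulVec, hU, one_mulVec]
  intro i j hij
  obtain ⟨μ, hμ⟩ := hM j
  calc (star U * M * U) i j = ((star U * M * U) *ᵥ Pi.single j 1) i := by
        rw [mulVec_single_one]; rfl
    _ = μ * (Pi.single j 1 : ι → 𝕜) i := by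
        rw [← mulVec_mulVec, ← mulVec_mulVec, hcol, hμ, mulVec_smul, hcol']; rfl
    _ = 0 := by simp [hij]

theorem Matrix.IsHermitian.exists_unitary_isDiag_of_commute {A B : Matrix ι ι 𝕜}
    (hA : A.IsHermitian) (hB : B.IsHermitian) (hAB : Commute A B) :
    ∃ U ∈ unitaryGroup ι 𝕜, (star U * A * U).IsDiag ∧ (star U * B * U).IsDiag := by
  obtain ⟨b, hb⟩ :=
    (isSymmetric_toEuclideanLin_iff.mpr hA).exists_orthonormalBasis_eigenvectors_of_commute
      (isSymmetric_toEuclideanLin_iff.mpr hB) (hAB.map (toLpLinAlgEquiv 2)) finrank_euclideanSpace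
  refine ⟨_, (EuclideanSpace.basisFun ι 𝕜).toMatrix_orthonormalBasis_mem_unitary b,
    b.isDiag_star_toMatrix_mul_mul_toMatrix fun j => ?_,
    b.isDiag_star_toMatrix_mul_mul_toMatrix fun j => ?_⟩
  · obtain ⟨μ, hμ⟩ := (hb j).1
    exact ⟨μ, congrArg WithLp.ofLp hμ⟩
  · obtain ⟨ν, hν⟩ := (hb j).2
    exact ⟨ν, congrArg WithLp.ofLp hν⟩

end SimultaneousDiagonalization

section RealImaginaryParts

open Complex

variable {ι : Type*}

theorem Matrix.map_re_add_I_smul_map_im (u : Matrix ι ι ℂ) :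
    (u.map re).map ofReal + I • (u.map im).map ofReal = u := by
  ext i j; simp [Complex.ext_iff]

theorem Matrix.IsSymm.star_eq_map_re_sub_I_smul_map_im {u : Matrix ι ι ℂ} (hu : u.IsSymm) :
    star u = (u.map re).map ofReal - I • (u.map im).map ofReal := by
  ext i j; simp [Complex.ext_iff, ← hu.apply i j]

theorem Matrix.map_ofReal_mul {l m n : Type*} [Fintype m] (M : Matrix l m ℝ)
    (N : Matrix m n ℝ) : (M * N).map ofReal = M.map ofReal * N.map ofReal :=
  Matrix.map_mul (f := ofRealHom)

variable [Fintype ι]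

theorem Matrix.IsSymm.commute_map_re_map_im {u : Matrix ι ι ℂ} (hu : u.IsSymm)
    (hnormal : Commute (star u) u) : Commute (u.map re) (u.map im) := by
  set X := (u.map re).map ofReal
  set Y := (u.map im).map ofReal
  have hXY : (2 * I) • (X * Y - Y * X) = 0 := by
    calc (2 * I) • (X * Y - Y * X)
      _ = (X - I • Y) * (X + I • Y) - (X + I • Y) * (X - I • Y) := by
        simp only [mul_add, add_mul, mul_sub, sub_mul, Matrix.smul_mul, Matrix.mul_smul,
          smul_sub, mul_smul]
        module
      _ = 0 := by
        rw [← hu.star_eq_map_re_sub_I_smul_map_im, map_re_add_I_smul_map_im, hnormal.eq,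
          sub_self]
  have hcomm : X * Y = Y * X := sub_eq_zero.mp <|
    (smul_eq_zero.mp hXY).resolve_left (mul_ne_zero two_ne_zero I_ne_zero)
  apply map_injective ofReal_injective
  simpa only [map_ofReal_mul] using hcomm

variable [DecidableEq ι]

theorem Matrix.map_ofReal_mul_transpose_eq_one {k : Matrix ι ι ℝ}
    (hk : k ∈ orthogonalGroup ι ℝ) : k.map ofReal * (k.map ofReal)ᵀ = 1 := by
  have hk' : k * kᵀ = 1 := by
    simpa [star_eq_conjTranspose] using (mem_orthogonalGroup_iff _ _).mp hk
  rw [← transpose_map, ← map_ofReal_mul, hk', Matrix.map_one _ ofReal_zero ofReal_one]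

theorem Matrix.isDiag_map_ofReal_mul_mul_inv {k : Matrix ι ι ℝ} (hk : k ∈ orthogonalGroup ι ℝ)
    {u : Matrix ι ι ℂ} (hre : (k * u.map re * kᵀ).IsDiag) (him : (k * u.map im * kᵀ).IsDiag) :
    (k.map ofReal * u * (k.map ofReal)⁻¹).IsDiag := by
  rw [inv_eq_right_inv (map_ofReal_mul_transpose_eq_one hk), ← map_re_add_I_smul_map_im u,
    mul_add, add_mul, Matrix.mul_smul, Matrix.smul_mul, ← transpose_map,
    ← map_ofReal_mul, ← map_ofReal_mul, ← map_ofReal_mul, ← map_ofReal_mul]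
  exact (hre.map ofReal_zero).add ((him.map ofReal_zero).smul I)

end RealImaginaryParts

theorem Matrix.IsSymm.of_isDiag_mul_mul_inv {ι R : Type*} [Fintype ι] [DecidableEq ι]
    [CommRing R] {K u : Matrix ι ι R} (hK : K * Kᵀ = 1) (h : (K * u * K⁻¹).IsDiag) : u.IsSymm := by
  rw [inv_eq_right_inv hK] at h
  have hK' : Kᵀ * K = 1 := mul_eq_one_comm.mp hK
  have hu : u = Kᵀ * (K * u * Kᵀ) * K :=
    calc u = Kᵀ * K * u * (Kᵀ * K) := by rw [hK', Matrix.one_mul, Matrix.mul_one]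
      _ = Kᵀ * (K * u * Kᵀ) * K := by simp only [Matrix.mul_assoc]
  rw [IsSymm, hu, transpose_mul, transpose_mul, transpose_transpose, h.isSymm.eq,
    Matrix.mul_assoc Kᵀ]

/-- A unitary matrix `u ∈ U(n)` is symmetric (`uᵀ = u`) iff there exists a real
orthogonal matrix `k ∈ O(n)` such that `k u k⁻¹` is diagonal. -/
theorem stmt_0 (n : ℕ) (u : Matrix (Fin n) (Fin n) ℂ)
    (hu : u ∈ Matrix.unitaryGroup (Fin n) ℂ) :
    uᵀ = u ↔ ∃ k : Matrix (Fin n) (Fin n) ℝ, k ∈ Matrix.orthogonalGroup (Fin n) ℝ ∧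
      ((k.map (fun x : ℝ => (x : ℂ))) * u * (k.map (fun x : ℝ => (x : ℂ)))⁻¹).IsDiag := by
  constructor
  · intro hsymm
    have hnormal : Commute (star u) u :=
      (mem_unitaryGroup_iff'.mp hu).trans (mem_unitaryGroup_iff.mp hu).symm
    obtain ⟨U, hU, hre, him⟩ := IsHermitian.exists_unitary_isDiag_of_commute
      (isHermitian_iff_isSymm.mpr (IsSymm.map hsymm Complex.re))
      (isHermitian_iff_isSymm.mpr (IsSymm.map hsymm Complex.im))
      (IsSymm.commute_map_re_map_im hsymm hnormal)
    have hUt : (star U)ᵀ = U := by simp [star_eq_conjTranspose]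
    refine ⟨star U, Unitary.star_mem hU,
      isDiag_map_ofReal_mul_mul_inv (Unitary.star_mem hU) ?_ ?_⟩ <;> rwa [hUt]
  · rintro ⟨k, hk, hdiag⟩
    exact IsSymm.of_isDiag_mul_mul_inv (map_ofReal_mul_transpose_eq_one hk) hdiag
end

section
/- The map w ↦ L_w = {z ∈ ℂⁿ : z − w z̄ = 0} is a bijection from the set W(n) of symmetric unitary matrices onto the set of Lagrangian subspaces of ℂⁿ, with inverse sending L = u(L₀) (for any u ∈ U(n)) to u uᵗ. -/
open Matrix

/-- The standard Hermitian product on `ℂⁿ`. -/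
noncomputable def hermP {n : ℕ} (z w : Fin n → ℂ) : ℂ :=
  ∑ i, z i * (starRingEnd ℂ) (w i)

/-- The standard symplectic form `ω = -Im h` on `ℂⁿ` viewed as a real vector space. -/
noncomputable def omegaP {n : ℕ} (z w : Fin n → ℂ) : ℝ := -(hermP z w).im

/-- A real subspace of `ℂⁿ` is Lagrangian if `ω` vanishes on it and its real dimension is `n`. -/
def IsLagrangian {n : ℕ} (L : Submodule ℝ (Fin n → ℂ)) : Prop :=
  (∀ z ∈ L, ∀ w ∈ L, omegaP z w = 0) ∧ Module.finrank ℝ (↥L) = n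

/-- The standard Lagrangian `L₀ = ℝⁿ ⊂ ℂⁿ`, as a set. -/
def L0set (n : ℕ) : Set (Fin n → ℂ) := {z | ∀ i, (z i).im = 0}

/-- `σ` is the Lagrangian involution associated to `L`: the real-linear map equal to the
identity on `L` and to `-Id` on `iL`. -/
def IsLagInv {n : ℕ} (L : Submodule ℝ (Fin n → ℂ))
    (σ : (Fin n → ℂ) →ₗ[ℝ] (Fin n → ℂ)) : Prop :=
  (∀ z ∈ L, σ z = z) ∧ (∀ z ∈ L, σ (Complex.I • z) = -(Complex.I • z))

/-! For a symmetric unitary `w`, the map `σ z = w z̄` is an antilinear involution, since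
`w w̄ = w w* = 1`. Its fixed space `L_w` satisfies `σ (a + i b) = a - i b` for `a, b ∈ L_w`, so
`ℂⁿ = L_w ⊕ i L_w` (split `z` as `(z + σ z)/2 + i · i(σ z - z)/2`), whence `dim_ℝ L_w = n`; and
`h(z, z') = h(z', z)` on `L_w` because `w` is symmetric, so `ω` vanishes there. The same
decomposition `z̄ = a + i b` shows that `w z = σ z̄ = a - i b` is determined by `L_w`.

Conversely, `Re h` is the real inner product and `Im h = -ω` vanishes on a Lagrangian `L`, so a
real orthonormal basis of `L` is `h`-orthonormal: it is the column set of some `u ∈ U(n)`, and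
`u(L₀) = L`. Finally `u uᵀ z̄ = z` iff `u* z` is real, so `L_{u uᵀ} = u(L₀)`. -/

namespace Matrix

variable {ι : Type*} [Fintype ι]

lemma star_mulVec_star_of_transpose_eq {w : Matrix ι ι ℂ} (hs : wᵀ = w) (z : ι → ℂ) :
    star (w *ᵥ star z) = star w *ᵥ z := by
  rw [star_mulVec, star_star, ← mulVec_transpose,
    ← conjTranspose_transpose_eq_transpose_conjTranspose, hs, star_eq_conjTranspose]

lemma star_star_mulVec (u : Matrix ι ι ℂ) (v : ι → ℂ) : star (star u *ᵥ v) = uᵀ *ᵥ star v := by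
  rw [star_mulVec, star_eq_conjTranspose, conjTranspose_conjTranspose, mulVec_transpose]

lemma mul_transpose_mem_unitaryGroup [DecidableEq ι] {u : Matrix ι ι ℂ}
    (hu : u ∈ unitaryGroup ι ℂ) : u * uᵀ ∈ unitaryGroup ι ℂ :=
  mul_mem hu (transpose_mem_unitaryGroup_iff.mpr hu)

end Matrix

section LagSubspace

variable {ι : Type*} [Fintype ι]

def lagSubspace (w : Matrix ι ι ℂ) : Submodule ℝ (ι → ℂ) where
  carrier := {z | w *ᵥ star z = z}
  add_mem' {z z'} hz hz' := by
    simp only [Set.mem_ofPred_eq, star_add, mulVec_add] at *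
    rw [hz, hz']
  zero_mem' := by simp
  smul_mem' r z hz := by
    simp only [Set.mem_ofPred_eq, star_smul, mulVec_smul] at *
    rw [hz, star_trivial]

variable {w w' : Matrix ι ι ℂ}

lemma mem_lagSubspace {z : ι → ℂ} : z ∈ lagSubspace w ↔ w *ᵥ star z = z := Iff.rfl

lemma coe_lagSubspace (w : Matrix ι ι ℂ) :
    (lagSubspace w : Set (ι → ℂ)) = {z | z - w.mulVec (fun i => (starRingEnd ℂ) (z i)) = 0} := by
  ext z
  exact eq_comm.trans sub_eq_zero.symm

lemma mulVec_star_add_I_smul {a b : ι → ℂ} (ha : a ∈ lagSubspace w) (hb : b ∈ lagSubspace w) :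
    w *ᵥ star (a + Complex.I • b) = a - Complex.I • b := by
  rw [star_add, star_smul, mulVec_add, mulVec_smul, mem_lagSubspace.mp ha,
    mem_lagSubspace.mp hb, Complex.star_def, Complex.conj_I, neg_smul, sub_eq_add_neg]

lemma star_dotProduct_star_eq_of_mem_lagSubspace (hs : wᵀ = w) {z z' : ι → ℂ}
    (hz : z ∈ lagSubspace w) (hz' : z' ∈ lagSubspace w) :
    star (z ⬝ᵥ star z') = z ⬝ᵥ star z' := by
  calc star (z ⬝ᵥ star z') = star z ⬝ᵥ z' := by rw [star_dotProduct, dotProduct_comm]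
    _ = star z ⬝ᵥ (w *ᵥ star z') := by rw [mem_lagSubspace.mp hz']
    _ = (w *ᵥ star z) ⬝ᵥ star z' := by rw [dotProduct_mulVec, ← mulVec_transpose, hs]
    _ = z ⬝ᵥ star z' := by rw [mem_lagSubspace.mp hz]

variable [DecidableEq ι]

lemma mulVec_star_mulVec_star (hw : w ∈ unitaryGroup ι ℂ) (hs : wᵀ = w) (z : ι → ℂ) :
    w *ᵥ star (w *ᵥ star z) = z := by
  rw [star_mulVec_star_of_transpose_eq hs, mulVec_mulVec, mem_unitaryGroup_iff.mp hw,
    one_mulVec]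

lemma exists_eq_add_I_smul (hw : w ∈ unitaryGroup ι ℂ) (hs : wᵀ = w) (z : ι → ℂ) :
    ∃ a ∈ lagSubspace w, ∃ b ∈ lagSubspace w, a + Complex.I • b = z := by
  set σz := w *ᵥ star z
  refine ⟨(2⁻¹ : ℝ) • (z + σz), ?_, (2⁻¹ : ℝ) • (Complex.I • (σz - z)), ?_, ?_⟩
  · rw [mem_lagSubspace, star_smul, mulVec_smul, star_add, mulVec_add,
      mulVec_star_mulVec_star hw hs, star_trivial, add_comm]
  · rw [mem_lagSubspace, star_smul, mulVec_smul, star_smul, mulVec_smul, star_sub, mulVec_sub,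
      mulVec_star_mulVec_star hw hs, star_trivial, Complex.star_def, Complex.conj_I, neg_smul,
      ← smul_neg, neg_sub]
  · ext i
    simp only [Pi.add_apply, Pi.smul_apply, Pi.sub_apply, Complex.real_smul, smul_eq_mul]
    push_cast
    linear_combination (2⁻¹ * (σz i - z i)) * Complex.I_sq

lemma eq_of_lagSubspace_eq (hw : w ∈ unitaryGroup ι ℂ) (hs : wᵀ = w)
    (h : lagSubspace w = lagSubspace w') : w = w' := by
  refine mulVec_injective (funext fun v => ?_)
  obtain ⟨a, ha, b, hb, hab⟩ := exists_eq_add_I_smul hw hs (star v)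
  have ha' : a ∈ lagSubspace w' := h ▸ ha
  have hb' : b ∈ lagSubspace w' := h ▸ hb
  rw [← star_star v, ← hab, mulVec_star_add_I_smul ha hb, mulVec_star_add_I_smul ha' hb']

lemma bijective_lagSubspace_coprod_I_smul (hw : w ∈ unitaryGroup ι ℂ) (hs : wᵀ = w) :
    Function.Bijective
      ((lagSubspace w).subtype.coprod (Complex.I • (lagSubspace w).subtype)) := by
  refine ⟨(injective_iff_map_eq_zero _).mpr ?_, fun z => ?_⟩
  · rintro ⟨a, b⟩ h
    replace h : (a : ι → ℂ) + Complex.I • (b : ι → ℂ) = 0 := h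
    have h' := mulVec_star_add_I_smul a.2 b.2
    rw [h, star_zero, mulVec_zero] at h'
    have hi (i : ι) : a.1 i + Complex.I * b.1 i = 0 ∧ 0 = a.1 i - Complex.I * b.1 i :=
      ⟨congrFun h i, congrFun h' i⟩
    refine Prod.mk_eq_zero.mpr ⟨Submodule.coe_eq_zero.mp (funext fun i => ?_),
      Submodule.coe_eq_zero.mp (funext fun i => ?_)⟩
    · rw [Pi.zero_apply]
      linear_combination ((hi i).1 - (hi i).2) / 2
    · rw [Pi.zero_apply]
      linear_combination (-Complex.I / 2) * ((hi i).1 + (hi i).2) + b.1 i * Complex.I_sq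
  · obtain ⟨a, ha, b, hb, rfl⟩ := exists_eq_add_I_smul hw hs z
    exact ⟨(⟨a, ha⟩, ⟨b, hb⟩), rfl⟩

lemma finrank_lagSubspace (hw : w ∈ unitaryGroup ι ℂ) (hs : wᵀ = w) :
    Module.finrank ℝ (lagSubspace w) = Fintype.card ι := by
  have h := (LinearEquiv.ofBijective _ (bijective_lagSubspace_coprod_I_smul hw hs)).finrank_eq
  simp only [Module.finrank_prod, Module.finrank_pi_fintype, Complex.finrank_real_complex,
    Finset.sum_const, Finset.card_univ, smul_eq_mul] at h
  omega

end LagSubspace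

section Lagrangian

variable {n : ℕ}

lemma isLagrangian_lagSubspace {w : Matrix (Fin n) (Fin n) ℂ}
    (hw : w ∈ unitaryGroup (Fin n) ℂ) (hs : wᵀ = w) : IsLagrangian (lagSubspace w) := by
  refine ⟨fun z hz z' hz' => ?_, by rw [finrank_lagSubspace hw hs, Fintype.card_fin]⟩
  rw [omegaP, neg_eq_zero, ← Complex.conj_eq_iff_im]
  exact star_dotProduct_star_eq_of_mem_lagSubspace hs hz hz'

lemma mem_L0set_iff {x : Fin n → ℂ} : x ∈ L0set n ↔ star x = x := by
  simp only [L0set, Set.mem_ofPred_eq, funext_iff, Pi.star_apply, Complex.star_def,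
    Complex.conj_eq_iff_im]

lemma coe_lagSubspace_mul_transpose {u : Matrix (Fin n) (Fin n) ℂ}
    (hu : u ∈ unitaryGroup (Fin n) ℂ) :
    (lagSubspace (u * uᵀ) : Set (Fin n → ℂ)) = (fun x => u *ᵥ x) '' L0set n := by
  ext z
  simp only [SetLike.mem_coe, mem_lagSubspace, Set.mem_image, mem_L0set_iff, ← mulVec_mulVec]
  constructor
  · intro hz
    refine ⟨star u *ᵥ z, ?_, by rw [mulVec_mulVec, mem_unitaryGroup_iff.mp hu, one_mulVec]⟩
    rw [star_star_mulVec]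
    conv_rhs => rw [← hz, mulVec_mulVec, mem_unitaryGroup_iff'.mp hu, one_mulVec]
  · rintro ⟨x, hx, rfl⟩
    rw [← star_star_mulVec, mulVec_mulVec, mem_unitaryGroup_iff'.mp hu, one_mulVec, hx]

lemma re_hermP_eq_inner (z z' : Fin n → ℂ) :
    (hermP z z').re =
      inner ℝ (WithLp.toLp 2 z : EuclideanSpace ℂ (Fin n)) (WithLp.toLp 2 z') := by
  rw [PiLp.inner_apply, hermP, Complex.re_sum]
  refine Finset.sum_congr rfl fun i _ => ?_
  rw [Complex.inner, Complex.mul_re, Complex.mul_re, Complex.conj_re, Complex.conj_im,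
    Complex.conj_re, Complex.conj_im]
  ring

lemma exists_basis_hermP_orthonormal {L : Submodule ℝ (Fin n → ℂ)} (hL : IsLagrangian L) :
    ∃ b : Module.Basis (Fin n) ℝ L,
      ∀ j k, hermP (b j : Fin n → ℂ) (b k) = if j = k then 1 else 0 := by
  let L' : Submodule ℝ (EuclideanSpace ℂ (Fin n)) :=
    L.comap (WithLp.linearEquiv 2 ℝ (Fin n → ℂ)).toLinearMap
  let φ : L' ≃ₗ[ℝ] L := (WithLp.linearEquiv 2 ℝ (Fin n → ℂ)).ofSubmodule' L
  let B := (stdOrthonormalBasis ℝ L').reindex (finCongr (φ.finrank_eq.trans hL.2))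
  refine ⟨B.toBasis.map φ, fun j k => ?_⟩
  have hcoe (j : Fin n) :
      WithLp.toLp 2 ((B.toBasis.map φ j : L) : Fin n → ℂ) = (B j : EuclideanSpace ℂ (Fin n)) :=
    rfl
  have hre := re_hermP_eq_inner (B.toBasis.map φ j : Fin n → ℂ) (B.toBasis.map φ k)
  rw [hcoe, hcoe, ← Submodule.coe_inner, orthonormal_iff_ite.mp B.orthonormal] at hre
  have him := neg_eq_zero.mp (hL.1 _ (B.toBasis.map φ j).2 _ (B.toBasis.map φ k).2)
  apply Complex.ext <;> split_ifs <;> simp_all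

lemma mem_unitaryGroup_of_hermP_orthonormal {e : Fin n → Fin n → ℂ}
    (he : ∀ j k, hermP (e j) (e k) = if j = k then 1 else 0) :
    Matrix.of e ∈ unitaryGroup (Fin n) ℂ := by
  rw [mem_unitaryGroup_iff]
  ext j k
  rw [mul_apply, one_apply, ← he]
  rfl

lemma L0set_eq_range_ofReal : L0set n = Set.range (fun c : Fin n → ℝ => fun i => (c i : ℂ)) := by
  ext z
  refine ⟨fun hz => ⟨fun i => (z i).re, funext fun i => Complex.ext rfl (hz i).symm⟩, ?_⟩
  rintro ⟨c, rfl⟩ i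
  exact Complex.ofReal_im (c i)

lemma image_L0set_eq_of_basis {L : Submodule ℝ (Fin n → ℂ)} (b : Module.Basis (Fin n) ℝ L) :
    (fun x => (Matrix.of fun j => (b j : Fin n → ℂ))ᵀ *ᵥ x) '' L0set n = L := by
  have hcomb (c : Fin n → ℝ) :
      (Matrix.of fun j => (b j : Fin n → ℂ))ᵀ *ᵥ (fun i => (c i : ℂ)) = b.equivFun.symm c := by
    rw [mulVec_transpose, vecMul_eq_sum, Module.Basis.equivFun_symm_apply, Submodule.coe_sum]
    simp only [Submodule.coe_smul, Complex.coe_smul]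
    rfl
  rw [L0set_eq_range_ofReal, ← Set.range_comp, Function.comp_def]
  simp only [hcomb]
  rw [← Function.comp_def Subtype.val, Set.range_comp, b.equivFun.symm.surjective.range_eq,
    Set.image_univ, Subtype.range_coe]

lemma exists_unitary_image_L0set {L : Submodule ℝ (Fin n → ℂ)} (hL : IsLagrangian L) :
    ∃ u ∈ unitaryGroup (Fin n) ℂ, (fun z => u *ᵥ z) '' L0set n = L := by
  obtain ⟨b, hb⟩ := exists_basis_hermP_orthonormal hL
  exact ⟨_, transpose_mem_unitaryGroup_iff.mpr (mem_unitaryGroup_of_hermP_orthonormal hb),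
    image_L0set_eq_of_basis b⟩

end Lagrangian

/-- `w ↦ L_w = {z : z - w z̄ = 0}` is a bijection from the set
`W(n) = {w ∈ U(n) : wᵀ = w}` of symmetric unitary matrices onto the set of Lagrangian
subspaces of `ℂⁿ`; its inverse sends `L = u(L₀)` (for any unitary `u`) to `u uᵀ`. -/
theorem stmt_6 (n : ℕ) :
    (∀ w : Matrix (Fin n) (Fin n) ℂ, w ∈ Matrix.unitaryGroup (Fin n) ℂ → wᵀ = w →
      ∃ L : Submodule ℝ (Fin n → ℂ), IsLagrangian L ∧
        (L : Set (Fin n → ℂ)) = {z | z - w.mulVec (fun i => (starRingEnd ℂ) (z i)) = 0}) ∧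
    (∀ w w' : Matrix (Fin n) (Fin n) ℂ,
      w ∈ Matrix.unitaryGroup (Fin n) ℂ → wᵀ = w →
      w' ∈ Matrix.unitaryGroup (Fin n) ℂ → w'ᵀ = w' →
      {z : Fin n → ℂ | z - w.mulVec (fun i => (starRingEnd ℂ) (z i)) = 0} =
        {z : Fin n → ℂ | z - w'.mulVec (fun i => (starRingEnd ℂ) (z i)) = 0} → w = w') ∧
    (∀ L : Submodule ℝ (Fin n → ℂ), IsLagrangian L →
      ∃ w : Matrix (Fin n) (Fin n) ℂ, w ∈ Matrix.unitaryGroup (Fin n) ℂ ∧ wᵀ = w ∧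
        (L : Set (Fin n → ℂ)) = {z | z - w.mulVec (fun i => (starRingEnd ℂ) (z i)) = 0} ∧
        ∀ u : Matrix (Fin n) (Fin n) ℂ, u ∈ Matrix.unitaryGroup (Fin n) ℂ →
          (fun z => u.mulVec z) '' L0set n = (L : Set (Fin n → ℂ)) → w = u * uᵀ) := by
  have eq_of_coe_eq {w w' : Matrix (Fin n) (Fin n) ℂ} (hw : w ∈ unitaryGroup (Fin n) ℂ)
      (hs : wᵀ = w) (h : (lagSubspace w : Set (Fin n → ℂ)) = lagSubspace w') : w = w' :=
    eq_of_lagSubspace_eq hw hs (SetLike.coe_injective h)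
  refine ⟨fun w hw hs => ⟨lagSubspace w, isLagrangian_lagSubspace hw hs, coe_lagSubspace w⟩,
    fun w w' hw hs _ _ h => eq_of_coe_eq hw hs (by rwa [coe_lagSubspace, coe_lagSubspace]),
    fun L hL => ?_⟩
  obtain ⟨u₀, hu₀, hL₀⟩ := exists_unitary_image_L0set hL
  have hw₀ := mul_transpose_mem_unitaryGroup hu₀
  have hs₀ := (isSymm_mul_transpose_self u₀).eq
  refine ⟨u₀ * u₀ᵀ, hw₀, hs₀, ?_, fun u hu hL' => eq_of_coe_eq hw₀ hs₀ ?_⟩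
  · rw [← coe_lagSubspace, coe_lagSubspace_mul_transpose hu₀, hL₀]
  · rw [coe_lagSubspace_mul_transpose hu₀, coe_lagSubspace_mul_transpose hu, hL₀, hL']
end

section
/- For any Lagrangian subspace L ⊂ ℂⁿ and any v ∈ U(n) with v(L) = L₀, one has σ_{L₀} ∘ σ_L = vᵗ v (as complex-linear maps on ℂⁿ). -/
open Matrix

/-! Since `v` maps `L` onto `ℝⁿ`, every `z` splits as `x + i y` with `x, y ∈ L`, and
`σ_L z = x - i y`, so it suffices to check `conj x = vᵀ v x` for `x ∈ L`. There `v x` is real,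
so `conj x = vᵀ conj (v) conj x = vᵀ conj (v x) = vᵀ v x`, using `vᵀ conj (v) = (v* v)ᵀ = 1`. -/

namespace Matrix

variable {ι R : Type*} [Fintype ι] [CommRing R] [StarRing R]

theorem star_mulVec_eq_map_star_mulVec_star (v : Matrix ι ι R) (x : ι → R) :
    star (v *ᵥ x) = v.map star *ᵥ star x :=
  funext fun i => RingHom.map_mulVec (starRingEnd R) v x i

variable [DecidableEq ι] {v : Matrix ι ι R}

theorem transpose_mul_map_star_of_mem_unitaryGroup (hv : v ∈ unitaryGroup ι R) :
    vᵀ * v.map star = 1 := by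
  rw [← conjTranspose_transpose, ← transpose_mul, ← star_eq_conjTranspose,
    mem_unitaryGroup_iff'.mp hv, transpose_one]

theorem star_eq_transpose_mul_mulVec_of_star_mulVec (hv : v ∈ unitaryGroup ι R) {x : ι → R}
    (hx : star (v *ᵥ x) = v *ᵥ x) : star x = (vᵀ * v) *ᵥ x := by
  rw [← mulVec_mulVec, ← hx, star_mulVec_eq_map_star_mulVec_star, mulVec_mulVec,
    transpose_mul_map_star_of_mem_unitaryGroup hv, one_mulVec]

end Matrix

theorem star_eq_self_of_mem_L0set {n : ℕ} {c : Fin n → ℂ} (hc : c ∈ L0set n) : star c = c :=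
  funext fun i => Complex.conj_eq_iff_im.mpr (hc i)

theorem exists_mem_add_I_smul_of_image_eq_L0set {n : ℕ} {L : Submodule ℝ (Fin n → ℂ)}
    {v : Matrix (Fin n) (Fin n) ℂ} (hv : v ∈ unitaryGroup (Fin n) ℂ)
    (hvL : (fun z => v *ᵥ z) '' (L : Set (Fin n → ℂ)) = L0set n) (z : Fin n → ℂ) :
    ∃ x ∈ L, ∃ y ∈ L, z = x + Complex.I • y := by
  have hvs : star v * v = 1 := mem_unitaryGroup_iff'.mp hv
  have hpre : ∀ c ∈ L0set n, star v *ᵥ c ∈ L := by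
    intro c hc
    obtain ⟨w, hw, rfl⟩ := hvL.symm ▸ hc
    rwa [mulVec_mulVec, hvs, one_mulVec]
  refine ⟨star v *ᵥ fun i => ((v *ᵥ z) i).re, hpre _ fun i => Complex.ofReal_im _,
    star v *ᵥ fun i => ((v *ᵥ z) i).im, hpre _ fun i => Complex.ofReal_im _, ?_⟩
  rw [← mulVec_smul, ← mulVec_add]
  conv_lhs => rw [← one_mulVec z, ← hvs, ← mulVec_mulVec]
  congr 1
  funext i
  simp [Complex.ext_iff]

theorem stmt_12_general (n : ℕ) (L : Submodule ℝ (Fin n → ℂ))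
    (σ : (Fin n → ℂ) →ₗ[ℝ] (Fin n → ℂ)) (hσ : IsLagInv L σ)
    (v : Matrix (Fin n) (Fin n) ℂ) (hv : v ∈ Matrix.unitaryGroup (Fin n) ℂ)
    (hvL : (fun z => v.mulVec z) '' (L : Set (Fin n → ℂ)) = L0set n) :
    ∀ z : Fin n → ℂ, (fun i => (starRingEnd ℂ) (σ z i)) = (vᵀ * v).mulVec z := by
  have hconj : ∀ x ∈ L, star x = (vᵀ * v) *ᵥ x := fun x hx =>
    star_eq_transpose_mul_mulVec_of_star_mulVec hv
      (star_eq_self_of_mem_L0set (hvL ▸ Set.mem_image_of_mem _ hx))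
  intro z
  obtain ⟨x, hx, y, hy, rfl⟩ := exists_mem_add_I_smul_of_image_eq_L0set hv hvL z
  have hσz : σ (x + Complex.I • y) = x - Complex.I • y := by
    rw [map_add, hσ.1 x hx, hσ.2 y hy, sub_eq_add_neg]
  change star (σ (x + Complex.I • y)) = _
  rw [hσz, star_sub, star_smul, mulVec_add, mulVec_smul, ← hconj x hx, ← hconj y hy,
    Complex.star_def, Complex.conj_I, neg_smul, sub_neg_eq_add]

/-- For a Lagrangian `L ⊂ ℂⁿ` and a unitary `v` with `v(L) = L₀`, one has
`σ_{L₀} ∘ σ_L = vᵀ v`, i.e. `conj (σ_L z) = (vᵀ v) z` for all `z`. -/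
theorem stmt_12 (n : ℕ) (L : Submodule ℝ (Fin n → ℂ)) (hL : IsLagrangian L)
    (σ : (Fin n → ℂ) →ₗ[ℝ] (Fin n → ℂ)) (hσ : IsLagInv L σ)
    (v : Matrix (Fin n) (Fin n) ℂ) (hv : v ∈ Matrix.unitaryGroup (Fin n) ℂ)
    (hvL : (fun z => v.mulVec z) '' (L : Set (Fin n → ℂ)) = L0set n) :
    ∀ z : Fin n → ℂ, (fun i => (starRingEnd ℂ) (σ z i)) = (vᵀ * v).mulVec z :=
  stmt_12_general n L σ hσ v hv hvL
end

section
/- The involution β(u₁,u₂,u₃) = ( ū₃⁻¹ ū₂⁻¹ u₁ᵗ ū₂ ū₃, ū₃⁻¹ u₂ᵗ ū₃, u₃ᵗ ) on U(n)³ intertwines the diagonal conjugation action with complex conjugation: for all φ ∈ U(n), β(φu₁φ⁻¹, φu₂φ⁻¹, φu₃φ⁻¹) = (φ̄ v₁ φ̄⁻¹, φ̄ v₂ φ̄⁻¹, φ̄ v₃ φ̄⁻¹), where (v₁,v₂,v₃) = β(u₁,u₂,u₃). Moreover, μ(β(u₁,u₂,u₃)) = (conj(μ(u₁,u₂,u₃)))⁻¹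 where μ(u₁,u₂,u₃) = u₁u₂u₃. -/
open Matrix

/-- Entrywise complex conjugation of a matrix. -/
noncomputable def conjMat {n : ℕ} (u : Matrix (Fin n) (Fin n) ℂ) : Matrix (Fin n) (Fin n) ℂ :=
  u.map (starRingEnd ℂ)

/-- The involution `β(u₁,u₂,u₃) = (ū₃⁻¹ ū₂⁻¹ u₁ᵀ ū₂ ū₃, ū₃⁻¹ u₂ᵀ ū₃, u₃ᵀ)` on `U(n)³`. -/
noncomputable def betaMap (n : ℕ)
    (t : Matrix (Fin n) (Fin n) ℂ × Matrix (Fin n) (Fin n) ℂ × Matrix (Fin n) (Fin n) ℂ) :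
    Matrix (Fin n) (Fin n) ℂ × Matrix (Fin n) (Fin n) ℂ × Matrix (Fin n) (Fin n) ℂ :=
  ((conjMat t.2.2)⁻¹ * (conjMat t.2.1)⁻¹ * (t.1)ᵀ * conjMat t.2.1 * conjMat t.2.2,
   (conjMat t.2.2)⁻¹ * (t.2.1)ᵀ * conjMat t.2.2,
   (t.2.2)ᵀ)

/-! On `U(n)` transposition is the inverse of entrywise conjugation `κ`, so `β = ι ∘ κ` for the
word map `ι(a, b, c) = (c⁻¹b⁻¹a⁻¹bc, c⁻¹b⁻¹c, c⁻¹)`. Since `κ` is a group endomorphism of `U(n)`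
and word maps commute with group homomorphisms, in particular with simultaneous conjugation, `β`
intertwines conjugation by `φ` with conjugation by `κ φ`; and `ι(a, b, c)` multiplies out to
`(abc)⁻¹`. -/

variable {G H : Type*} [Group G] [Group H]

def invTriple (a b c : G) : G × G × G :=
  (c⁻¹ * b⁻¹ * a⁻¹ * b * c, c⁻¹ * b⁻¹ * c, c⁻¹)

lemma map_invTriple (f : G →* H) (a b c : G) :
    invTriple (f a) (f b) (f c) =
      (f (invTriple a b c).1, f (invTriple a b c).2.1, f (invTriple a b c).2.2) := by
  simp [invTriple]

lemma invTriple_conj (g a b c : G) :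
    invTriple (g * a * g⁻¹) (g * b * g⁻¹) (g * c * g⁻¹) =
      (g * (invTriple a b c).1 * g⁻¹, g * (invTriple a b c).2.1 * g⁻¹,
        g * (invTriple a b c).2.2 * g⁻¹) :=
  map_invTriple (MulAut.conj g).toMonoidHom a b c

lemma invTriple_mul (a b c : G) :
    (invTriple a b c).1 * (invTriple a b c).2.1 * (invTriple a b c).2.2 = (a * b * c)⁻¹ := by
  simp only [invTriple]; group

namespace Matrix.UnitaryGroup

variable {n : ℕ}

noncomputable def conjHom : unitaryGroup (Fin n) ℂ →* unitaryGroup (Fin n) ℂ :=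
  MonoidHom.mk' map_star fun _ _ => Subtype.ext (Matrix.map_mul (f := starRingEnd ℂ))

lemma coe_conjHom (u : unitaryGroup (Fin n) ℂ) :
    (conjHom u : Matrix (Fin n) (Fin n) ℂ) = conjMat u :=
  rfl

lemma coe_inv (u : unitaryGroup (Fin n) ℂ) : ↑u⁻¹ = (u : Matrix (Fin n) (Fin n) ℂ)⁻¹ :=
  (inv_eq_right_inv u.2.2).symm

lemma transpose_eq_coe_conjHom_inv (u : unitaryGroup (Fin n) ℂ) :
    (u : Matrix (Fin n) (Fin n) ℂ)ᵀ = ↑(conjHom u)⁻¹ := by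
  rw [conjHom, MonoidHom.mk'_apply, map_star_inv_eq_transpose]; rfl

end Matrix.UnitaryGroup

open Matrix.UnitaryGroup

lemma betaMap_coe_eq_invTriple_conjHom {n : ℕ} (u₁ u₂ u₃ : unitaryGroup (Fin n) ℂ) :
    betaMap n (u₁, u₂, u₃) =
      Prod.map Subtype.val (Prod.map Subtype.val Subtype.val)
        (invTriple (conjHom u₁) (conjHom u₂) (conjHom u₃)) := by
  simp [betaMap, invTriple, transpose_eq_coe_conjHom_inv, ← coe_conjHom, ← coe_inv]

/-- `β` intertwines the diagonal conjugation action of `U(n)` with complex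
conjugation, and `μ ∘ β = (conj ∘ μ)⁻¹` where `μ(u₁,u₂,u₃) = u₁u₂u₃`. -/
theorem stmt_15 (n : ℕ) (u₁ u₂ u₃ φ : Matrix (Fin n) (Fin n) ℂ)
    (h₁ : u₁ ∈ Matrix.unitaryGroup (Fin n) ℂ) (h₂ : u₂ ∈ Matrix.unitaryGroup (Fin n) ℂ)
    (h₃ : u₃ ∈ Matrix.unitaryGroup (Fin n) ℂ) (hφ : φ ∈ Matrix.unitaryGroup (Fin n) ℂ) :
    (betaMap n (φ * u₁ * φ⁻¹, φ * u₂ * φ⁻¹, φ * u₃ * φ⁻¹) =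
      (conjMat φ * (betaMap n (u₁, u₂, u₃)).1 * (conjMat φ)⁻¹,
       conjMat φ * (betaMap n (u₁, u₂, u₃)).2.1 * (conjMat φ)⁻¹,
       conjMat φ * (betaMap n (u₁, u₂, u₃)).2.2 * (conjMat φ)⁻¹)) ∧
    (betaMap n (u₁, u₂, u₃)).1 * (betaMap n (u₁, u₂, u₃)).2.1 *
        (betaMap n (u₁, u₂, u₃)).2.2 = (conjMat (u₁ * u₂ * u₃))⁻¹ := by
  lift u₁ to unitaryGroup (Fin n) ℂ using h₁
  lift u₂ to unitaryGroup (Fin n) ℂ using h₂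
  lift u₃ to unitaryGroup (Fin n) ℂ using h₃
  lift φ to unitaryGroup (Fin n) ℂ using hφ
  constructor
  · simp only [← coe_inv, ← mul_val, betaMap_coe_eq_invTriple_conjHom, map_mul, map_inv,
      invTriple_conj, Prod.map_apply, Prod.map_fst, Prod.map_snd, ← coe_conjHom]
  · simp only [betaMap_coe_eq_invTriple_conjHom, Prod.map_fst, Prod.map_snd, ← mul_val,
      invTriple_mul, ← map_mul, ← coe_conjHom, ← coe_inv]
end

section
/- Let u₁, …, u_l ∈ U(n) with u₁⋯u_l = 1. Then there exist Lagrangian subspaces L₁ = ℝⁿ, L₂, …, L_l of ℂⁿ with u_j = σ_{L_j} σ_{L_{j+1}} for all j (indices mod l, σ_{L_{l+1}} = σ_{L₁}) if and only if u_l = u_lᵗ, u_{l−1} = ū_l⁻¹ u_{l−1}ᵗ ū_l, …, and u₁ = ū_l⁻¹ ū_{l−1}⁻¹ ⋯ ū₂⁻¹ u₁ᵗ ū₂ ⋯ ū_{l−1} ū_l. -/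
open Matrix

/-- The ordered partial product `u_j u_{j+1} ⋯ u_{l-1}` (0-based indexing). -/
noncomputable def tailProd (n l : ℕ) (u : Fin l → Matrix (Fin n) (Fin n) ℂ) (j : ℕ) :
    Matrix (Fin n) (Fin n) ℂ :=
  (((List.finRange l).drop j).map u).prod

/-!
Write `T_j = u_j ⋯ u_l` for the tail products, so that `T_1 = 1` and `T_j = u_j T_{j+1}`. For
`T_{j+1}` unitary and symmetric, the `j`-th condition says exactly that `T_j` is symmetric, so by
downward induction the conditions say that every `T_j` is symmetric.

For `T` unitary and symmetric, `z ↦ T z̄` is an antilinear involution whose fixed space is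
Lagrangian, and `σ_{T_j} σ_{T_{j+1}} = T_j T̄_{j+1} = u_j`. Conversely, `ℂⁿ = L ⊕ iL` for a
Lagrangian `L`, so `σ_L` is an involution determined by `L`. Hence `σ_{L_1}` is complex
conjugation, and `u_j = σ_{L_j} σ_{L_{j+1}}` gives inductively `σ_{L_j} z = T_jᵀ z̄`, an involution
only if `T_j` is symmetric.
-/

variable {n : ℕ}

open Complex (I)

section Conjugation

lemma conjMat_eq_conjTranspose_transpose (A : Matrix (Fin n) (Fin n) ℂ) : conjMat A = Aᵀᴴ := rfl

lemma star_mulVec_star (A : Matrix (Fin n) (Fin n) ℂ) (v : Fin n → ℂ) :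
    star (A *ᵥ star v) = conjMat A *ᵥ v := by
  funext i
  simp [mulVec, dotProduct, conjMat]

lemma transpose_mul_conjMat_of_mem_unitaryGroup {U : Matrix (Fin n) (Fin n) ℂ}
    (hU : U ∈ unitaryGroup (Fin n) ℂ) : Uᵀ * conjMat U = 1 :=
  mem_unitaryGroup_iff.mp (transpose_mem_unitaryGroup_iff.mpr hU)

lemma mul_conjMat_eq_one_iff {T : Matrix (Fin n) (Fin n) ℂ} (hT : T ∈ unitaryGroup (Fin n) ℂ) :
    T * conjMat T = 1 ↔ Tᵀ = T := by
  have hinv : T⁻¹ = Tᴴ := inv_eq_right_inv (mem_unitaryGroup_iff.mp hT)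
  rw [conjMat_eq_conjTranspose_transpose, ← conjTranspose_inj (A := Tᵀ)]
  constructor
  · intro h; rw [← inv_eq_right_inv h, hinv]
  · intro h; rw [h]; exact mem_unitaryGroup_iff.mp hT

end Conjugation

section MulVecStar

/-- For `T` unitary and symmetric, `z ↦ T z̄` is the Lagrangian involution of its fixed space. -/
noncomputable def mulVecStar (T : Matrix (Fin n) (Fin n) ℂ) : (Fin n → ℂ) →ₗ[ℝ] (Fin n → ℂ) where
  toFun z := T *ᵥ star z
  map_add' z w := by rw [star_add, mulVec_add]
  map_smul' c z := by
    have h : star (c • z) = (c : ℂ) • star z := by funext i; simp [Complex.real_smul]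
    rw [h, mulVec_smul]
    funext i
    simp [Complex.real_smul]

@[simp]
lemma mulVecStar_apply (T : Matrix (Fin n) (Fin n) ℂ) (z : Fin n → ℂ) :
    mulVecStar T z = T *ᵥ star z := rfl

lemma mulVecStar_mulVec (T A : Matrix (Fin n) (Fin n) ℂ) (z : Fin n → ℂ) :
    mulVecStar T (A *ᵥ z) = mulVecStar (T * conjMat A) z := by
  rw [mulVecStar_apply, mulVecStar_apply, ← star_star z, star_mulVec_star, star_star, mulVec_mulVec]

lemma mulVecStar_mulVecStar (T S : Matrix (Fin n) (Fin n) ℂ) (z : Fin n → ℂ) :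
    mulVecStar T (mulVecStar S z) = (T * conjMat S) *ᵥ z := by
  rw [mulVecStar_apply S, mulVecStar_mulVec, mulVecStar_apply, star_star]

lemma mulVecStar_smul_I (T : Matrix (Fin n) (Fin n) ℂ) (z : Fin n → ℂ) :
    mulVecStar T (I • z) = -(I • mulVecStar T z) := by
  have h : star (I • z) = (-I) • star z := by funext i; simp [Complex.conj_I]
  rw [mulVecStar_apply, mulVecStar_apply, h, mulVec_smul, neg_smul]

lemma involutive_mulVecStar_iff {T : Matrix (Fin n) (Fin n) ℂ}
    (hT : T ∈ unitaryGroup (Fin n) ℂ) : Function.Involutive (mulVecStar T) ↔ Tᵀ = T := by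
  simp_rw [← mul_conjMat_eq_one_iff hT, Function.Involutive, mulVecStar_mulVecStar]
  constructor
  · intro h
    exact mulVec_injective (funext fun z => by rw [h z, one_mulVec])
  · intro h z
    rw [h, one_mulVec]

end MulVecStar

section Lagrangian

noncomputable def smulI (n : ℕ) : (Fin n → ℂ) ≃ₗ[ℝ] (Fin n → ℂ) :=
  (LinearEquiv.smulOfNeZero ℂ (Fin n → ℂ) I Complex.I_ne_zero).restrictScalars ℝ

lemma smulI_apply (z : Fin n → ℂ) : smulI n z = I • z := rfl

lemma finrank_real_pi_complex : Module.finrank ℝ (Fin n → ℂ) = 2 * n := by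
  simp [Module.finrank_pi_fintype, Complex.finrank_real_complex, mul_comm]

lemma finrank_eq_iff_sup_map_smulI_eq_top {L : Submodule ℝ (Fin n → ℂ)}
    (h : L ⊓ L.map (smulI n).toLinearMap = ⊥) :
    Module.finrank ℝ L = n ↔ L ⊔ L.map (smulI n).toLinearMap = ⊤ := by
  have hsum := Submodule.finrank_sup_add_finrank_inf_eq L (L.map (smulI n).toLinearMap)
  rw [h, finrank_bot, add_zero, LinearEquiv.finrank_map_eq] at hsum
  constructor
  · intro hL
    apply Submodule.eq_top_of_finrank_eq
    rw [hsum, hL, finrank_real_pi_complex]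
    ring
  · intro htop
    rw [htop, finrank_top, finrank_real_pi_complex] at hsum
    omega

lemma omegaP_smul_I_self (w : Fin n → ℂ) : omegaP w (I • w) = ∑ i, Complex.normSq (w i) := by
  simp only [omegaP, hermP, Complex.im_sum, ← Finset.sum_neg_distrib]
  congr 1; funext i
  simp [Complex.conj_I, Complex.normSq]

lemma IsLagrangian.inf_map_smulI_eq_bot {L : Submodule ℝ (Fin n → ℂ)} (hL : IsLagrangian L) :
    L ⊓ L.map (smulI n).toLinearMap = ⊥ := by
  rw [Submodule.eq_bot_iff]
  rintro _ ⟨hIw, w, hw, rfl⟩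
  have hnorm : ∑ i, Complex.normSq (w i) = 0 := by
    rw [← omegaP_smul_I_self]; exact hL.1 w hw _ hIw
  have hw0 : w = 0 := funext fun i => Complex.normSq_eq_zero.mp
    ((Finset.sum_eq_zero_iff_of_nonneg fun i _ => Complex.normSq_nonneg (w i)).mp hnorm i
      (Finset.mem_univ i))
  simp [hw0]

lemma IsLagrangian.exists_eq_add_smul_I {L : Submodule ℝ (Fin n → ℂ)} (hL : IsLagrangian L)
    (z : Fin n → ℂ) : ∃ a ∈ L, ∃ b ∈ L, z = a + I • b := by
  have hz : z ∈ L ⊔ L.map (smulI n).toLinearMap := by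
    rw [((finrank_eq_iff_sup_map_smulI_eq_top hL.inf_map_smulI_eq_bot).mp hL.2)]
    exact Submodule.mem_top
  obtain ⟨a, ha, _, ⟨b, hb, rfl⟩, rfl⟩ := Submodule.mem_sup.mp hz
  exact ⟨a, ha, b, hb, rfl⟩

lemma IsLagInv.involutive {L : Submodule ℝ (Fin n → ℂ)} {σ : (Fin n → ℂ) →ₗ[ℝ] (Fin n → ℂ)}
    (hσ : IsLagInv L σ) (hL : IsLagrangian L) : Function.Involutive σ := by
  intro z
  obtain ⟨a, ha, b, hb, rfl⟩ := hL.exists_eq_add_smul_I z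
  rw [map_add, hσ.1 a ha, hσ.2 b hb, map_add, map_neg, hσ.1 a ha, hσ.2 b hb, neg_neg]

lemma IsLagInv.unique {L : Submodule ℝ (Fin n → ℂ)} {σ τ : (Fin n → ℂ) →ₗ[ℝ] (Fin n → ℂ)}
    (hσ : IsLagInv L σ) (hτ : IsLagInv L τ) (hL : IsLagrangian L) : σ = τ := by
  refine LinearMap.ext fun z => ?_
  obtain ⟨a, ha, b, hb, rfl⟩ := hL.exists_eq_add_smul_I z
  rw [map_add, map_add, hσ.1 a ha, hσ.2 b hb, hτ.1 a ha, hτ.2 b hb]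

end Lagrangian

section RealForm

variable {σ : (Fin n → ℂ) →ₗ[ℝ] (Fin n → ℂ)}

lemma isLagInv_eqLocus_id (hI : ∀ z, σ (I • z) = -(I • σ z)) :
    IsLagInv (σ.eqLocus LinearMap.id) σ :=
  ⟨fun _ hz => hz, fun z hz => by rw [hI, show σ z = z from hz]⟩

lemma finrank_eqLocus_id (hσ : Function.Involutive σ) (hI : ∀ z, σ (I • z) = -(I • σ z)) :
    Module.finrank ℝ (σ.eqLocus LinearMap.id) = n := by
  have hinf : σ.eqLocus LinearMap.id ⊓ (σ.eqLocus LinearMap.id).map (smulI n).toLinearMap = ⊥ := by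
    rw [Submodule.eq_bot_iff]
    rintro _ ⟨hIw, w, hw, rfl⟩
    have hw' : σ w = w := hw
    have h : I • w = -(I • w) := by
      conv_lhs => rw [← show σ (I • w) = I • w from hIw]
      rw [hI, hw']
    have h2 : (2 : ℝ) • (I • w) = 0 := by
      rw [two_smul]
      nth_rewrite 1 [h]
      exact neg_add_cancel _
    simpa [smulI_apply] using h2
  rw [finrank_eq_iff_sup_map_smulI_eq_top hinf, Submodule.eq_top_iff']
  intro z
  have hz : z = (1 / 2 : ℝ) • (z + σ z) + I • ((1 / 2 : ℝ) • -(I • (z - σ z))) := by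
    rw [smul_comm, smul_neg, smul_smul, Complex.I_mul_I, neg_one_smul, neg_neg]
    module
  rw [hz]
  refine Submodule.add_mem_sup ?_ ⟨_, ?_, rfl⟩
  · rw [LinearMap.mem_eqLocus, map_smul, map_add, hσ z, add_comm, LinearMap.id_apply]
  · rw [SetLike.mem_coe, LinearMap.mem_eqLocus, map_smul, map_neg, hI, map_sub, hσ z, neg_neg,
      LinearMap.id_apply, ← neg_sub z, smul_neg]

end RealForm

section FixedSpace

lemma hermP_eq_dotProduct_star (z w : Fin n → ℂ) : hermP z w = z ⬝ᵥ star w := rfl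

lemma hermP_mulVec {T : Matrix (Fin n) (Fin n) ℂ} (hT : T ∈ unitaryGroup (Fin n) ℂ)
    (z w : Fin n → ℂ) : hermP (T *ᵥ z) (T *ᵥ w) = hermP z w := by
  rw [hermP_eq_dotProduct_star, hermP_eq_dotProduct_star, star_mulVec, dotProduct_comm,
    dotProduct_mulVec, vecMul_vecMul, show Tᴴ * T = 1 from mem_unitaryGroup_iff'.mp hT,
    vecMul_one, dotProduct_comm]

lemma hermP_star (z w : Fin n → ℂ) :
    hermP (star z) (star w) = (starRingEnd ℂ) (hermP z w) := by
  simp [hermP, map_sum, mul_comm]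

lemma omegaP_eq_zero_of_mem_eqLocus {T : Matrix (Fin n) (Fin n) ℂ}
    (hT : T ∈ unitaryGroup (Fin n) ℂ) {z w : Fin n → ℂ}
    (hz : z ∈ (mulVecStar T).eqLocus LinearMap.id) (hw : w ∈ (mulVecStar T).eqLocus LinearMap.id) :
    omegaP z w = 0 := by
  have hz' : T *ᵥ star z = z := hz
  have hw' : T *ᵥ star w = w := hw
  have hreal : (starRingEnd ℂ) (hermP z w) = hermP z w := by
    conv_rhs => rw [← hz', ← hw', hermP_mulVec hT, hermP_star]
  rw [omegaP, Complex.conj_eq_iff_im.mp hreal, neg_zero]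

lemma isLagrangian_eqLocus_mulVecStar {T : Matrix (Fin n) (Fin n) ℂ}
    (hT : T ∈ unitaryGroup (Fin n) ℂ) (hTs : Tᵀ = T) :
    IsLagrangian ((mulVecStar T).eqLocus LinearMap.id) :=
  ⟨fun _ hz _ hw => omegaP_eq_zero_of_mem_eqLocus hT hz hw,
    finrank_eqLocus_id ((involutive_mulVecStar_iff hT).mpr hTs) (mulVecStar_smul_I T)⟩

lemma coe_eqLocus_mulVecStar_one :
    ((mulVecStar (1 : Matrix (Fin n) (Fin n) ℂ)).eqLocus LinearMap.id : Set (Fin n → ℂ)) =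
      L0set n := by
  ext z
  simp only [SetLike.mem_coe, LinearMap.mem_eqLocus, mulVecStar_apply, one_mulVec,
    LinearMap.id_apply, L0set, Set.mem_ofPred_eq, funext_iff, Pi.star_apply]
  exact forall_congr' fun i => Complex.conj_eq_iff_im

lemma IsLagInv.eq_mulVecStar_one {L : Submodule ℝ (Fin n → ℂ)}
    {σ : (Fin n → ℂ) →ₗ[ℝ] (Fin n → ℂ)} (hσ : IsLagInv L σ) (hL : IsLagrangian L)
    (hL0 : (L : Set (Fin n → ℂ)) = L0set n) : σ = mulVecStar 1 := by
  obtain rfl : L = (mulVecStar 1).eqLocus LinearMap.id :=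
    SetLike.coe_injective (hL0.trans coe_eqLocus_mulVecStar_one.symm)
  exact hσ.unique (isLagInv_eqLocus_id (mulVecStar_smul_I 1)) hL

end FixedSpace

section TailProd

variable {l : ℕ} (u : Fin l → Matrix (Fin n) (Fin n) ℂ)

lemma tailProd_of_le {k : ℕ} (hk : l ≤ k) : tailProd n l u k = 1 := by
  rw [tailProd, List.drop_eq_nil_of_le (by simpa using hk), List.map_nil, List.prod_nil]

lemma tailProd_eq_mul {k : ℕ} (hk : k < l) :
    tailProd n l u k = u ⟨k, hk⟩ * tailProd n l u (k + 1) := by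
  rw [tailProd, List.drop_eq_getElem_cons (by simpa using hk)]
  simp [tailProd]

lemma tailProd_mem_unitaryGroup (hu : ∀ j, u j ∈ unitaryGroup (Fin n) ℂ) (k : ℕ) :
    tailProd n l u k ∈ unitaryGroup (Fin n) ℂ :=
  Submonoid.list_prod_mem _ fun _ hx => by
    obtain ⟨j, _, rfl⟩ := List.mem_map.mp hx
    exact hu j

lemma tailProd_val_add_one [NeZero l] (hprod : tailProd n l u 0 = 1) (j : Fin l) :
    tailProd n l u ↑(j + 1) = tailProd n l u (↑j + 1) := by
  rcases (Nat.succ_le_of_lt j.isLt).lt_or_eq with h | h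
  · rw [Fin.val_add_one_of_lt' h]
  · rw [tailProd_of_le u h.ge, ← hprod]
    congr 1
    simp [Fin.val_add, show (j : ℕ) + 1 = l from h]

lemma eq_conjMat_inv_mul_transpose_mul_conjMat_iff {a T : Matrix (Fin n) (Fin n) ℂ}
    (hT : T ∈ unitaryGroup (Fin n) ℂ) (hTs : Tᵀ = T) :
    a = (conjMat T)⁻¹ * aᵀ * conjMat T ↔ (a * T)ᵀ = a * T := by
  have hconj : conjMat T = Tᴴ := by rw [conjMat_eq_conjTranspose_transpose, hTs]
  have hTTh : T * Tᴴ = 1 := mem_unitaryGroup_iff.mp hT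
  have hThT : Tᴴ * T = 1 := mem_unitaryGroup_iff'.mp hT
  rw [hconj, inv_eq_left_inv hTTh, transpose_mul, hTs]
  constructor
  · intro h
    conv_rhs => rw [h]
    rw [mul_assoc, hThT, mul_one]
  · intro h
    rw [h, mul_assoc, hTTh, mul_one]

lemma forall_eq_conjMat_inv_mul_transpose_mul_conjMat_iff
    (hu : ∀ j, u j ∈ unitaryGroup (Fin n) ℂ) :
    (∀ j : Fin l, u j = (conjMat (tailProd n l u (j + 1)))⁻¹ * (u j)ᵀ *
        conjMat (tailProd n l u (j + 1))) ↔
      ∀ k, (tailProd n l u k)ᵀ = tailProd n l u k := by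
  constructor
  · intro hβ
    suffices h : ∀ m k, l ≤ k + m → (tailProd n l u k)ᵀ = tailProd n l u k from
      fun k => h l k (Nat.le_add_left l k)
    intro m
    induction m with
    | zero => intro k hk; rw [tailProd_of_le u (by simpa using hk), transpose_one]
    | succ m ih =>
      intro k hk
      rcases lt_or_ge k l with hkl | hkl
      · rw [tailProd_eq_mul u hkl]
        exact (eq_conjMat_inv_mul_transpose_mul_conjMat_iff (tailProd_mem_unitaryGroup u hu _)
          (ih (k + 1) (by omega))).mp (hβ ⟨k, hkl⟩)
      · rw [tailProd_of_le u hkl, transpose_one]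
  · intro hsym j
    refine (eq_conjMat_inv_mul_transpose_mul_conjMat_iff (tailProd_mem_unitaryGroup u hu _)
      (hsym _)).mpr ?_
    rw [← tailProd_eq_mul u j.isLt]
    exact hsym j

lemma eq_mulVecStar_transpose_tailProd [NeZero l] (hu : ∀ j, u j ∈ unitaryGroup (Fin n) ℂ)
    (hprod : tailProd n l u 0 = 1) {σ : Fin l → ((Fin n → ℂ) →ₗ[ℝ] (Fin n → ℂ))}
    (hσ0 : σ 0 = mulVecStar 1) (hσ : ∀ j, Function.Involutive (σ j))
    (hrel : ∀ j : Fin l, ∀ z, u j *ᵥ z = σ j (σ (j + 1) z)) (j : Fin l) :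
    σ j = mulVecStar (tailProd n l u j)ᵀ := by
  obtain ⟨k, hk⟩ := j
  induction k with
  | zero =>
    change σ ⟨0, hk⟩ = mulVecStar (tailProd n l u 0)ᵀ
    rw [show (⟨0, hk⟩ : Fin l) = 0 from Fin.ext (Fin.val_zero l).symm, hσ0, hprod, transpose_one]
  | succ k ih =>
    have hk' : k < l := by omega
    have hnext : (⟨k, hk'⟩ + 1 : Fin l) = ⟨k + 1, hk⟩ := Fin.ext (Fin.val_add_one_of_lt' hk)
    refine LinearMap.ext fun z => ?_
    calc σ ⟨k + 1, hk⟩ z = σ ⟨k, hk'⟩ (u ⟨k, hk'⟩ *ᵥ z) := by rw [hrel, hnext, hσ]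
      _ = mulVecStar ((tailProd n l u (k + 1))ᵀ * ((u ⟨k, hk'⟩)ᵀ * conjMat (u ⟨k, hk'⟩))) z := by
        rw [ih hk', mulVecStar_mulVec, tailProd_eq_mul u hk', transpose_mul, mul_assoc]
      _ = mulVecStar (tailProd n l u (k + 1))ᵀ z := by
        rw [transpose_mul_conjMat_of_mem_unitaryGroup (hu _), mul_one]

end TailProd

/-- Under `u₁⋯u_l = 1`, the tuple `(u₁,…,u_l)` of unitary matrices is
`σ₀`-Lagrangian (i.e. there are Lagrangian subspaces `L₁ = ℝⁿ, L₂, …, L_l` with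
`u_j = σ_{L_j} σ_{L_{j+1}}` cyclically) iff it is fixed by the involution `β`, i.e.
`u_j = ū_l⁻¹ ⋯ ū_{j+1}⁻¹ u_jᵀ ū_{j+1} ⋯ ū_l` for every `j`. -/
theorem stmt_17 (n l : ℕ) [NeZero l] (u : Fin l → Matrix (Fin n) (Fin n) ℂ)
    (hu : ∀ j, u j ∈ Matrix.unitaryGroup (Fin n) ℂ)
    (hprod : tailProd n l u 0 = 1) :
    (∃ (L : Fin l → Submodule ℝ (Fin n → ℂ))
        (σ : Fin l → ((Fin n → ℂ) →ₗ[ℝ] (Fin n → ℂ))),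
      ((L 0 : Set (Fin n → ℂ)) = L0set n) ∧
      (∀ j, IsLagrangian (L j)) ∧
      (∀ j, IsLagInv (L j) (σ j)) ∧
      (∀ j : Fin l, ∀ z : Fin n → ℂ, (u j).mulVec z = σ j (σ (j + 1) z))) ↔
    (∀ j : Fin l,
      u j = (conjMat (tailProd n l u ((j : ℕ) + 1)))⁻¹ * (u j)ᵀ *
        conjMat (tailProd n l u ((j : ℕ) + 1))) := by
  rw [forall_eq_conjMat_inv_mul_transpose_mul_conjMat_iff u hu]
  constructor
  · rintro ⟨L, σ, hL0, hLag, hInv, hrel⟩ k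
    rcases lt_or_ge k l with hk | hk
    · have hσk := eq_mulVecStar_transpose_tailProd u hu hprod
        ((hInv 0).eq_mulVecStar_one (hLag 0) hL0) (fun j => (hInv j).involutive (hLag j)) hrel
        ⟨k, hk⟩
      have hinvol := (hInv ⟨k, hk⟩).involutive (hLag _)
      rw [hσk, involutive_mulVecStar_iff
        (transpose_mem_unitaryGroup_iff.mpr (tailProd_mem_unitaryGroup u hu k)),
        transpose_transpose] at hinvol
      exact hinvol.symm
    · rw [tailProd_of_le u hk, transpose_one]
  · intro hsym
    refine ⟨fun j => (mulVecStar (tailProd n l u j)).eqLocus LinearMap.id,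
      fun j => mulVecStar (tailProd n l u j), ?_,
      fun j => isLagrangian_eqLocus_mulVecStar (tailProd_mem_unitaryGroup u hu j) (hsym j),
      fun j => isLagInv_eqLocus_id (mulVecStar_smul_I _), fun j z => ?_⟩
    · dsimp only
      rw [Fin.val_zero, hprod]
      exact coe_eqLocus_mulVecStar_one
    · rw [mulVecStar_mulVecStar, tailProd_val_add_one u hprod, tailProd_eq_mul u j.isLt, mul_assoc,
        (mul_conjMat_eq_one_iff (tailProd_mem_unitaryGroup u hu _)).mpr (hsym _), mul_one]
end
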